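/- arXiv:1812.05990 — 3 statements merged into one kernel-verified Lean document; each statement's English description precedes it below -/
import Mathlib

section
/- Let α ∈ (0,1), β > 0, Δt > 0, T ∈ ℕ, fixed outside temperatures F^out : {1,...,T} → ℝ, initial temperature F⁰, and two power sequences P^∨, P^∧ with P^∨_τ ≤ P^∧_τ for all τ. Suppose the indoor temperatures generated by P^∨ and by P^∧ (via F_t = F_{t-1} + α·(F^out_t − F_{t-1}) + (Δt/β)·P_t) both lie in [F̲, F̄] for all t ∈ {1,...,T}. Then for any λ : {1,...,T} → [0,1], the temperatures generated by P^o_τ = λ_τ·P^∨_τ + (1−λ_τ)·P^∧_τ also lie in [F̲, F̄] for all t. -/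
/-- HVAC comfortable-temperature limits are preserved under
time-varying convex combinations of ordered power sequences (heater mode β > 0). -/
theorem stmt_5 (alpha : ℝ) (ha : alpha ∈ Set.Ioo (0 : ℝ) 1)
    (beta : ℝ) (hb : 0 < beta) (Dt : ℝ) (hDt : 0 < Dt) (T : ℕ)
    (Fout : ℕ → ℝ) (F0 Flow Fbar : ℝ)
    (Plow Pup : ℕ → ℝ) (horder : ∀ τ ∈ Finset.Icc 1 T, Plow τ ≤ Pup τ)
    (Flo Fup : ℕ → ℝ) (hFlo0 : Flo 0 = F0) (hFup0 : Fup 0 = F0)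
    (hFlorec : ∀ t : ℕ, 1 ≤ t →
      Flo t = Flo (t - 1) + alpha * (Fout t - Flo (t - 1)) + (Dt / beta) * Plow t)
    (hFuprec : ∀ t : ℕ, 1 ≤ t →
      Fup t = Fup (t - 1) + alpha * (Fout t - Fup (t - 1)) + (Dt / beta) * Pup t)
    (hFloB : ∀ t ∈ Finset.Icc 1 T, Flow ≤ Flo t ∧ Flo t ≤ Fbar)
    (hFupB : ∀ t ∈ Finset.Icc 1 T, Flow ≤ Fup t ∧ Fup t ≤ Fbar)
    (lam : ℕ → ℝ) (hlam : ∀ τ ∈ Finset.Icc 1 T, lam τ ∈ Set.Icc (0 : ℝ) 1)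
    (Fo : ℕ → ℝ) (hFo0 : Fo 0 = F0)
    (hForec : ∀ t : ℕ, 1 ≤ t →
      Fo t = Fo (t - 1) + alpha * (Fout t - Fo (t - 1)) +
        (Dt / beta) * (lam t * Plow t + (1 - lam t) * Pup t)) :
    ∀ t ∈ Finset.Icc 1 T, Flow ≤ Fo t ∧ Fo t ≤ Fbar := by
  obtain ⟨ha0, ha1⟩ := ha
  have key : ∀ t : ℕ, t ≤ T → Flo t ≤ Fo t ∧ Fo t ≤ Fup t := by
    intro t
    induction t with
    | zero => intro _; rw [hFo0, hFlo0, hFup0]; exact ⟨le_refl _, le_refl _⟩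
    | succ n ih =>
      intro hle
      have hn : n ≤ T := Nat.le_of_succ_le hle
      obtain ⟨ihl, ihu⟩ := ih hn
      have hmem : n + 1 ∈ Finset.Icc 1 T := Finset.mem_Icc.mpr ⟨Nat.succ_le_succ (Nat.zero_le n), hle⟩
      have h1 : (1 : ℕ) ≤ n + 1 := Nat.succ_le_succ (Nat.zero_le n)
      have hsub : n + 1 - 1 = n := rfl
      have e1 := hFlorec (n+1) h1
      have e2 := hFuprec (n+1) h1
      have e3 := hForec (n+1) h1
      rw [hsub] at e1 e2 e3
      obtain ⟨hl0, hl1⟩ := hlam (n+1) hmem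
      have hP := horder (n+1) hmem
      have hc : 0 ≤ Dt / beta := le_of_lt (div_pos hDt hb)
      have hPlo : Plow (n+1) ≤ lam (n+1) * Plow (n+1) + (1 - lam (n+1)) * Pup (n+1) := by
        nlinarith
      have hPup : lam (n+1) * Plow (n+1) + (1 - lam (n+1)) * Pup (n+1) ≤ Pup (n+1) := by
        nlinarith
      constructor
      · rw [e1, e3]; nlinarith [mul_le_mul_of_nonneg_left hPlo hc]
      · rw [e3, e2]; nlinarith [mul_le_mul_of_nonneg_left hPup hc]
  intro t ht
  obtain ⟨h1, h2⟩ := Finset.mem_Icc.mp ht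
  obtain ⟨kl, ku⟩ := key t h2
  exact ⟨le_trans (hFloB t ht).1 kl, le_trans ku (hFupB t ht).2⟩
end

section
/- Let κ ∈ (0,1], Δt > 0, E₀ ∈ [E̲, Ē], and let P^∧ and P^∨ be power sequences that both generate SOC trajectories within [E̲, Ē] under E_t = κ E_{t-1} − Δt P_t, with P^∧_τ ≤ P^∨_τ for all τ. If the power sequence P satisfies P_t = λ_t P^∨_t + (1−λ_t) P^∧_t for a sequence λ_t ∈ [0,1], then E_t = κ E_{t-1} − Δt P_t satisfies E̲ ≤ E_t ≤ Ē for all t. -/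
/-- positive claim: convex-combination selections between two
ordered feasible ES power trajectories preserve the SOC bounds. -/
theorem stmt_15 (kappa : ℝ) (hk : kappa ∈ Set.Ioc (0 : ℝ) 1)
    (Dt : ℝ) (hDt : 0 < Dt) (T : ℕ) (E0 Elow Ebar : ℝ)
    (hE0 : E0 ∈ Set.Icc Elow Ebar)
    (Pup Plow : ℕ → ℝ) (horder : ∀ τ ∈ Finset.Icc 1 T, Pup τ ≤ Plow τ)
    (Eup Elo : ℕ → ℝ) (hEup0 : Eup 0 = E0) (hElo0 : Elo 0 = E0)
    (hEuprec : ∀ t : ℕ, 1 ≤ t → Eup t = kappa * Eup (t - 1) - Dt * Pup t)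
    (hElorec : ∀ t : ℕ, 1 ≤ t → Elo t = kappa * Elo (t - 1) - Dt * Plow t)
    (hEupB : ∀ t ∈ Finset.Icc 1 T, Elow ≤ Eup t ∧ Eup t ≤ Ebar)
    (hEloB : ∀ t ∈ Finset.Icc 1 T, Elow ≤ Elo t ∧ Elo t ≤ Ebar)
    (lam : ℕ → ℝ) (hlam : ∀ t ∈ Finset.Icc 1 T, lam t ∈ Set.Icc (0 : ℝ) 1)
    (E : ℕ → ℝ) (hE0' : E 0 = E0)
    (hErec : ∀ t : ℕ, 1 ≤ t →
      E t = kappa * E (t - 1) - Dt * (lam t * Plow t + (1 - lam t) * Pup t)) :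
    ∀ t ∈ Finset.Icc 1 T, Elow ≤ E t ∧ E t ≤ Ebar := by
  have hk0 : 0 < kappa := hk.1
  have sandwich : ∀ t : ℕ, t ≤ T → Elo t ≤ E t ∧ E t ≤ Eup t := by
    intro t
    induction t with
    | zero => intro _; simp [hE0', hElo0, hEup0]
    | succ n ih =>
      intro hnT
      have hn : n ≤ T := Nat.le_of_succ_le hnT
      obtain ⟨ih1, ih2⟩ := ih hn
      have hmem : n + 1 ∈ Finset.Icc 1 T := by
        simp [Nat.succ_le_of_lt, Nat.lt_of_lt_of_le (Nat.lt_succ_self n) (le_refl _), hnT]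
      have hord := horder (n + 1) hmem
      obtain ⟨hl0, hl1⟩ := hlam (n + 1) hmem
      have h1 : 1 ≤ n + 1 := Nat.le_add_left 1 n
      have hE := hErec (n + 1) h1
      have hEu := hEuprec (n + 1) h1
      have hEl := hElorec (n + 1) h1
      simp only [Nat.add_sub_cancel] at hE hEu hEl
      have hPlo : Pup (n+1) ≤ lam (n+1) * Plow (n+1) + (1 - lam (n+1)) * Pup (n+1) := by
        nlinarith
      have hPhi : lam (n+1) * Plow (n+1) + (1 - lam (n+1)) * Pup (n+1) ≤ Plow (n+1) := by
        nlinarith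
      constructor
      · rw [hE, hEl]; nlinarith
      · rw [hE, hEu]; nlinarith
  intro t ht
  simp only [Finset.mem_Icc] at ht
  obtain ⟨h1, h2⟩ := sandwich t ht.2
  exact ⟨le_trans (hEloB t (Finset.mem_Icc.mpr ht)).1 h1,
         le_trans h2 (hEupB t (Finset.mem_Icc.mpr ht)).2⟩
end

section
/- Let α ∈ (0,1), β < 0 (cooler mode), Δt > 0, fixed outside temperatures, and two HVAC power sequences P^∨ ≤ P^∧ pointwise, both generating indoor temperatures within [F̲, F̄] via F_t = F_{t-1} + α(F^out_t − F_{t-1}) + (Δt/β)P_t. Then for any λ : {1,...,T} → [0,1], the powers P^o_τ = λ_τ P^∨_τ + (1−λ_τ) P^∧_τ generate indoor temperatures within [F̲, F̄]: the temperature generated by P^o at time t is at least that generated by P^∧ and at most that generated by P^∨. -/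
/-- HVAC cooler mode (β < 0): time-varying convex combinations of
ordered power sequences preserve the temperature limits, with the temperature of
the combination sandwiched between those of P^∧ (lower bound) and P^∨ (upper bound). -/
theorem stmt_19 (alpha : ℝ) (ha : alpha ∈ Set.Ioo (0 : ℝ) 1)
    (beta : ℝ) (hb : beta < 0) (Dt : ℝ) (hDt : 0 < Dt) (T : ℕ)
    (Fout : ℕ → ℝ) (F0 Flow Fbar : ℝ)
    (Plow Pup : ℕ → ℝ) (horder : ∀ τ ∈ Finset.Icc 1 T, Plow τ ≤ Pup τ)
    (Flo Fup : ℕ → ℝ) (hFlo0 : Flo 0 = F0) (hFup0 : Fup 0 = F0)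
    (hFlorec : ∀ t : ℕ, 1 ≤ t →
      Flo t = Flo (t - 1) + alpha * (Fout t - Flo (t - 1)) + (Dt / beta) * Plow t)
    (hFuprec : ∀ t : ℕ, 1 ≤ t →
      Fup t = Fup (t - 1) + alpha * (Fout t - Fup (t - 1)) + (Dt / beta) * Pup t)
    (hFloB : ∀ t ∈ Finset.Icc 1 T, Flow ≤ Flo t ∧ Flo t ≤ Fbar)
    (hFupB : ∀ t ∈ Finset.Icc 1 T, Flow ≤ Fup t ∧ Fup t ≤ Fbar)
    (lam : ℕ → ℝ) (hlam : ∀ τ ∈ Finset.Icc 1 T, lam τ ∈ Set.Icc (0 : ℝ) 1)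
    (Fo : ℕ → ℝ) (hFo0 : Fo 0 = F0)
    (hForec : ∀ t : ℕ, 1 ≤ t →
      Fo t = Fo (t - 1) + alpha * (Fout t - Fo (t - 1)) +
        (Dt / beta) * (lam t * Plow t + (1 - lam t) * Pup t)) :
    ∀ t ∈ Finset.Icc 1 T, (Flow ≤ Fo t ∧ Fo t ≤ Fbar) ∧
      Fup t ≤ Fo t ∧ Fo t ≤ Flo t := by
  obtain ⟨ha0, ha1⟩ := ha
  have hcoef : Dt / beta < 0 := div_neg_of_pos_of_neg hDt hb
  have key : ∀ t : ℕ, t ≤ T → Fup t ≤ Fo t ∧ Fo t ≤ Flo t := by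
    intro t
    induction t with
    | zero => intro _; simp [hFo0, hFup0, hFlo0]
    | succ s ih =>
      intro hsT
      have hs : s ≤ T := Nat.le_of_succ_le hsT
      obtain ⟨ih1, ih2⟩ := ih hs
      have h1 : 1 ≤ s + 1 := Nat.le_add_left 1 s
      have hmem : s + 1 ∈ Finset.Icc 1 T := Finset.mem_Icc.mpr ⟨h1, hsT⟩
      have hord := horder _ hmem
      obtain ⟨hl0, hl1⟩ := hlam _ hmem
      have hPo1 : Plow (s+1) ≤ lam (s+1) * Plow (s+1) + (1 - lam (s+1)) * Pup (s+1) := by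
        nlinarith
      have hPo2 : lam (s+1) * Plow (s+1) + (1 - lam (s+1)) * Pup (s+1) ≤ Pup (s+1) := by
        nlinarith
      have e1 := hFlorec (s+1) h1
      have e2 := hFuprec (s+1) h1
      have e3 := hForec (s+1) h1
      simp only [Nat.add_sub_cancel] at e1 e2 e3
      constructor
      · rw [e2, e3]
        nlinarith [mul_le_mul_of_nonpos_left hPo2 (le_of_lt hcoef)]
      · rw [e1, e3]
        nlinarith [mul_le_mul_of_nonpos_left hPo1 (le_of_lt hcoef)]
  intro t ht
  obtain ⟨ht1, htT⟩ := Finset.mem_Icc.mp ht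
  obtain ⟨k1, k2⟩ := key t htT
  exact ⟨⟨le_trans (hFupB t ht).1 k1, le_trans k2 (hFloB t ht).2⟩, k1, k2⟩
end
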